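/- arXiv:1405.4147 — 3 statements merged into one kernel-verified Lean document; each statement's English description precedes it below -/
import Mathlib

section
/- Let $(X, C, u)$ be an order unit space with a strictly positive state $\varphi$, and let $\Sigma_\varphi = \{x \in C^\circ : \varphi(x) = 1\}$. Then for all distinct $x, y \in \Sigma_\varphi$, Birkhoff's version of Hilbert's metric $d_H(x, y) = \log(M(x/y) M(y/x))$ equals the cross-ratio metric $\delta_H(x, y) = \log [x', x, y, y']$, where $x', y'$ are the endpoints of the open segment $\ell_{xy} \cap \Sigma_\varphi$ with $x$ between $x'$ and $y$ and $y$ between $y'$ and $x$, and $[x', x, y, y'] = \frac{|x'-y|}{|x'-x|} \cdot \frac{|y'-x|}{|y'-y|}$. Moreover, the topology induced by $d_H$ on $\Sigma_\varphi$ coincides with the topology induced by the order unit norm $\|\cdot\|_u$. -/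
namespace HilbertGeom

/-- An order unit space: a real vector space with an Archimedean cone `C` and order unit `u`. -/
structure OrderUnitSpace (X : Type*) [AddCommGroup X] [Module ℝ X] where
  C : Set X
  u : X
  convex : Convex ℝ C
  smul_mem : ∀ ⦃c : ℝ⦄, 0 ≤ c → ∀ ⦃x : X⦄, x ∈ C → c • x ∈ C
  salient : ∀ ⦃x : X⦄, x ∈ C → -x ∈ C → x = 0
  archimedean : ∀ x y : X, y ∈ C → (∀ n : ℕ, 0 < n → y - (n : ℝ) • x ∈ C) → -x ∈ C
  u_mem : u ∈ C
  orderUnit : ∀ x : X, ∃ c : ℝ, 0 < c ∧ c • u - x ∈ C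

namespace OrderUnitSpace

variable {X : Type*} [AddCommGroup X] [Module ℝ X] (S : OrderUnitSpace X)

/-- The order unit norm `‖x‖_u = inf {c > 0 : -c•u ≤ x ≤ c•u}`. -/
noncomputable def onorm (x : X) : ℝ :=
  sInf {c : ℝ | 0 < c ∧ c • S.u - x ∈ S.C ∧ c • S.u + x ∈ S.C}

/-- The interior of the cone `C` with respect to the order unit norm. -/
def interiorC : Set X :=
  {x : X | ∃ ε > 0, ∀ y : X, S.onorm (y - x) < ε → y ∈ S.C}

/-- `M(x/y) = inf {β > 0 : x ≤_C β y}`. -/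
noncomputable def M (x y : X) : ℝ := sInf {c : ℝ | 0 < c ∧ c • y - x ∈ S.C}

/-- Birkhoff's version of Hilbert's metric. -/
noncomputable def dH (x y : X) : ℝ := Real.log (S.M x y * S.M y x)

/-- `φ` is a state: a linear functional with `φ u = 1`. -/
def IsState (φ : X →ₗ[ℝ] ℝ) : Prop := φ S.u = 1

/-- `φ` is strictly positive: `φ(C \ {0}) ⊆ (0, ∞)`. -/
def StrictlyPos (φ : X →ₗ[ℝ] ℝ) : Prop := ∀ x ∈ S.C, x ≠ 0 → 0 < φ x

/-- The cross section `Σ_φ = {x ∈ C° : φ x = 1}`. -/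
def Sig (φ : X →ₗ[ℝ] ℝ) : Set X := {x | x ∈ S.interiorC ∧ φ x = 1}

/-- `z` lies in the closure of `A` with respect to the order unit norm. -/
def InClosure (A : Set X) (z : X) : Prop := ∀ ε > 0, ∃ w ∈ A, S.onorm (w - z) < ε

/-- The relative boundary of `Σ_φ` (in the affine hyperplane `φ = 1`, w.r.t. the order
unit norm): since `Σ_φ` is relatively open this is its closure minus itself. -/
def relBoundary (φ : X →ₗ[ℝ] ℝ) : Set X :=
  {z : X | S.InClosure (S.Sig φ) z ∧ z ∉ S.Sig φ}

/-- The straight line through `x` and `y`. -/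
def lineThrough (x y : X) : Set X := {z : X | ∃ t : ℝ, z = x + t • (y - x)}

end OrderUnitSpace

end HilbertGeom

/-!
Write `y' = x + t • (y - x)` with `t > 1`. For `c > 1`,
`c • y - x = (c - 1) • (x + r • (y - x))` with `r = c / (c - 1)`, so `c • y - x ∈ C` exactly when
the point of `ℓ_{xy}` at parameter `r` lies in `C`. As `x` is interior and `ℓ_{xy} ∩ Σ_φ` is the
open segment `(x', y')`, this holds for `r < t` and fails for `r > t`; hence
`M(x/y) = t / (t - 1) = ‖y' - x‖ / ‖y' - y‖`, and symmetrically for `M(y/x)`.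

For the topologies: if `‖w - z‖` is small against the radius of a ball around `z` inside `C`,
then `w ≤ (1 + η) z` and `z ≤ (1 + η) w`, so `d_H(w, z) ≤ 2 log (1 + η)`. Conversely, strict
positivity of `φ` gives `M ≥ 1` on `Σ_φ`, so a small `d_H(w, z)` forces `M(w/z), M(z/w) < 1 + η`;
then `-η (1 + η) z ≤ w - z ≤ η (1 + η) z`, and `z ≤ c u` bounds `‖w - z‖` by `η (1 + η) c`.
-/

namespace HilbertGeom

lemma csInf_eq_of_Ioi_subset_of_subset_Ici {α : Type*} [ConditionallyCompleteLinearOrder α]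
    [DenselyOrdered α] [NoMaxOrder α] {s : Set α} {a : α} (h₁ : Set.Ioi a ⊆ s)
    (h₂ : s ⊆ Set.Ici a) : sInf s = a :=
  (isGLB_Ioi.of_subset_of_superset isGLB_Ici h₁ h₂).csInf_eq (Set.nonempty_Ioi.mono h₁)

lemma div_sub_one_le_iff_le_div_sub_one {c t : ℝ} (hc : 1 < c) (ht : 1 < t) :
    c / (c - 1) ≤ t ↔ t / (t - 1) ≤ c := by
  rw [div_le_iff₀ (sub_pos.2 hc), div_le_iff₀ (sub_pos.2 ht)]
  constructor <;> intro h <;> linarith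

lemma div_sub_one_lt_iff_lt_div_sub_one {c t : ℝ} (hc : 1 < c) (ht : 1 < t) :
    c / (c - 1) < t ↔ t / (t - 1) < c := by
  rw [div_lt_iff₀ (sub_pos.2 hc), div_lt_iff₀ (sub_pos.2 ht)]
  constructor <;> intro h <;> linarith

section Line

open AffineMap OrderUnitSpace

variable {X : Type*} [AddCommGroup X] [Module ℝ X]

lemma exists_neg_lineMap_eq_of_mem_openSegment {a z b : X} (h : z ∈ openSegment ℝ a b) :
    ∃ s < (0 : ℝ), lineMap z b s = a := by
  obtain ⟨θ, ⟨hθ₀, hθ₁⟩, rfl⟩ := (openSegment_eq_image_lineMap ℝ a b).le h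
  refine ⟨-θ / (1 - θ), div_neg_of_neg_of_pos (neg_neg_of_pos hθ₀) (sub_pos.2 hθ₁), ?_⟩
  simp only [lineMap_apply_module]
  match_scalars <;> field_simp <;> ring

lemma lineMap_mem_iff_of_inter_eq_openSegment {A : Set X} {x y : X} (hxy : x ≠ y) {s t : ℝ}
    (hst : s < t) (h : lineThrough x y ∩ A = openSegment ℝ (lineMap x y s) (lineMap x y t))
    (r : ℝ) : lineMap x y r ∈ A ↔ r ∈ Set.Ioo s t := by
  have hline : lineMap x y r ∈ lineThrough x y := ⟨r, by rw [lineMap_apply_module']; abel⟩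
  rw [← image_openSegment, openSegment_eq_Ioo hst] at h
  rw [← (lineMap_injective ℝ hxy).mem_set_image, ← h]
  exact ⟨fun hr => ⟨hline, hr⟩, And.right⟩

lemma lineThrough_comm (x y : X) : lineThrough x y = lineThrough y x := by
  ext z
  constructor <;> rintro ⟨t, rfl⟩ <;> exact ⟨1 - t, by module⟩

end Line

namespace OrderUnitSpace

open AffineMap

variable {X : Type*} [AddCommGroup X] [Module ℝ X] (S : OrderUnitSpace X)

lemma add_mem {a b : X} (ha : a ∈ S.C) (hb : b ∈ S.C) : a + b ∈ S.C := by
  have h := S.smul_mem zero_le_two (S.convex ha hb one_half_pos.le one_half_pos.le (by norm_num))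
  rwa [smul_add, smul_smul, smul_smul, mul_one_div_cancel two_ne_zero, one_smul, one_smul] at h

lemma smul_mem_iff {a : ℝ} (ha : 0 < a) {x : X} : a • x ∈ S.C ↔ x ∈ S.C := by
  refine ⟨fun h => ?_, fun h => S.smul_mem ha.le h⟩
  simpa [smul_smul, inv_mul_cancel₀ ha.ne'] using S.smul_mem (inv_pos.2 ha).le h

def onormSet (x : X) : Set ℝ := {c : ℝ | 0 < c ∧ c • S.u - x ∈ S.C ∧ c • S.u + x ∈ S.C}

lemma onorm_eq_sInf (x : X) : S.onorm x = sInf (S.onormSet x) := rfl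

lemma onormSet_nonempty (x : X) : (S.onormSet x).Nonempty := by
  obtain ⟨c₁, hc₁, h₁⟩ := S.orderUnit x
  obtain ⟨c₂, hc₂, h₂⟩ := S.orderUnit (-x)
  refine ⟨c₁ + c₂, by positivity, ?_, ?_⟩
  · have e : (c₁ + c₂) • S.u - x = (c₁ • S.u - x) + c₂ • S.u := by module
    exact e ▸ S.add_mem h₁ (S.smul_mem hc₂.le S.u_mem)
  · have e : (c₁ + c₂) • S.u + x = (c₂ • S.u - -x) + c₁ • S.u := by module
    exact e ▸ S.add_mem h₂ (S.smul_mem hc₁.le S.u_mem)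

lemma onorm_nonneg (x : X) : 0 ≤ S.onorm x :=
  Real.sInf_nonneg fun _ hc => hc.1.le

lemma onorm_le {x : X} {c : ℝ} (hc : 0 < c) (h₁ : c • S.u - x ∈ S.C) (h₂ : c • S.u + x ∈ S.C) :
    S.onorm x ≤ c :=
  csInf_le ⟨0, fun _ hc => hc.1.le⟩ ⟨hc, h₁, h₂⟩

lemma onorm_zero : S.onorm (0 : X) = 0 := by
  have h : S.onormSet (0 : X) = Set.Ioi 0 := by
    ext c
    refine ⟨fun h => h.1, fun (h : 0 < c) => ?_⟩
    have hu := S.smul_mem h.le S.u_mem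
    exact ⟨h, by simpa using hu, by simpa using hu⟩
  rw [onorm_eq_sInf, h, csInf_Ioi]

lemma onormSet_neg (x : X) : S.onormSet (-x) = S.onormSet x := by
  ext c
  simp only [onormSet, Set.mem_ofPred_eq, sub_neg_eq_add, ← sub_eq_add_neg]
  tauto

lemma onorm_neg (x : X) : S.onorm (-x) = S.onorm x := by
  rw [onorm_eq_sInf, onorm_eq_sInf, onormSet_neg]

open Pointwise in
lemma onormSet_smul {a : ℝ} (ha : 0 < a) (x : X) : S.onormSet (a • x) = a • S.onormSet x := by
  ext c
  rw [Set.mem_smul_set_iff_inv_smul_mem₀ ha.ne', smul_eq_mul]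
  have hsub : a • ((a⁻¹ * c) • S.u - x) = c • S.u - a • x := by
    rw [smul_sub, smul_smul, mul_inv_cancel_left₀ ha.ne']
  have hadd : a • ((a⁻¹ * c) • S.u + x) = c • S.u + a • x := by
    rw [smul_add, smul_smul, mul_inv_cancel_left₀ ha.ne']
  simp only [onormSet, Set.mem_ofPred_eq, ← S.smul_mem_iff ha (x := _ - x),
    ← S.smul_mem_iff ha (x := _ + x), hsub, hadd, mul_pos_iff_of_pos_left (inv_pos.2 ha)]

lemma onorm_smul (a : ℝ) (x : X) : S.onorm (a • x) = |a| * S.onorm x := by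
  rcases lt_trichotomy a 0 with h | rfl | h
  · rw [← neg_neg a, neg_smul, onorm_neg, abs_neg, abs_of_pos (neg_pos.2 h), onorm_eq_sInf,
      S.onormSet_smul (neg_pos.2 h), Real.sInf_smul_of_nonneg (neg_pos.2 h).le, smul_eq_mul,
      onorm_eq_sInf]
  · simp [S.onorm_zero]
  · rw [onorm_eq_sInf, S.onormSet_smul h, Real.sInf_smul_of_nonneg h.le, abs_of_pos h,
      smul_eq_mul, onorm_eq_sInf]

lemma mem_onormSet_of_onorm_lt {x : X} {b : ℝ} (h : S.onorm x < b) : b ∈ S.onormSet x := by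
  obtain ⟨c, ⟨hc, hc₁, hc₂⟩, hcb⟩ := exists_lt_of_csInf_lt (S.onormSet_nonempty x) h
  have hu : (b - c) • S.u ∈ S.C := S.smul_mem (sub_pos.2 hcb).le S.u_mem
  refine ⟨hc.trans hcb, ?_, ?_⟩
  · have e : b • S.u - x = (b - c) • S.u + (c • S.u - x) := by module
    exact e ▸ S.add_mem hu hc₁
  · have e : b • S.u + x = (b - c) • S.u + (c • S.u + x) := by module
    exact e ▸ S.add_mem hu hc₂

lemma eq_zero_of_onorm_eq_zero {x : X} (h : S.onorm x = 0) : x = 0 := by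
  have neg_mem : ∀ y : X, S.onorm y = 0 → -y ∈ S.C := fun y hy =>
    S.archimedean y S.u S.u_mem fun n hn => by
      have hn' : (0 : ℝ) < n := by exact_mod_cast hn
      have hmem := (S.mem_onormSet_of_onorm_lt (b := 1 / n) (by rw [hy]; positivity)).2.1
      have e : S.u - (n : ℝ) • y = (n : ℝ) • ((1 / n : ℝ) • S.u - y) := by
        rw [smul_sub, smul_smul, mul_one_div_cancel hn'.ne', one_smul]
      exact e ▸ S.smul_mem hn'.le hmem
  exact S.salient (by simpa using neg_mem (-x) (by rw [onorm_neg, h])) (neg_mem x h)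

lemma onorm_pos {x : X} (hx : x ≠ 0) : 0 < S.onorm x :=
  (S.onorm_nonneg x).lt_of_ne fun h => hx (S.eq_zero_of_onorm_eq_zero h.symm)

lemma smul_add_mem_of_onorm_lt {z : X} {ε : ℝ} (hz : ∀ y, S.onorm (y - z) < ε → y ∈ S.C)
    {a : ℝ} (ha : 0 < a) {v : X} (hv : S.onorm v < a * ε) : a • z + v ∈ S.C := by
  have hmem : z + a⁻¹ • v ∈ S.C := hz _ <| by
    rwa [add_sub_cancel_left, onorm_smul, abs_of_pos (inv_pos.2 ha), inv_mul_lt_iff₀ ha]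
  have e : a • (z + a⁻¹ • v) = a • z + v := by
    rw [smul_add, smul_smul, mul_inv_cancel₀ ha.ne', one_smul]
  exact e ▸ S.smul_mem ha.le hmem

lemma interiorC_subset : S.interiorC ⊆ S.C := fun x ⟨_, hε, h⟩ =>
  h x (by rwa [sub_self, S.onorm_zero])

lemma lineMap_mem_interiorC {z p : X} (hz : z ∈ S.interiorC) (hp : p ∈ S.C) {l : ℝ}
    (h₀ : 0 ≤ l) (h₁ : l < 1) : lineMap z p l ∈ S.interiorC := by
  obtain ⟨ε, hε, hball⟩ := hz
  refine ⟨(1 - l) * ε, mul_pos (sub_pos.2 h₁) hε, fun y hy => ?_⟩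
  have e : y = ((1 - l) • z + (y - lineMap z p l)) + l • p := by
    rw [lineMap_apply_module]; abel
  rw [e]
  exact S.add_mem (S.smul_add_mem_of_onorm_lt hball (sub_pos.2 h₁) hy) (S.smul_mem h₀ hp)

def MSet (x y : X) : Set ℝ := {c : ℝ | 0 < c ∧ c • y - x ∈ S.C}

lemma M_eq_sInf (x y : X) : S.M x y = sInf (S.MSet x y) := rfl

lemma M_le {x y : X} {c : ℝ} (hc : 0 < c) (h : c • y - x ∈ S.C) : S.M x y ≤ c :=
  csInf_le ⟨0, fun _ hc => hc.1.le⟩ ⟨hc, h⟩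

lemma MSet_nonempty {y : X} (hy : y ∈ S.interiorC) (x : X) : (S.MSet x y).Nonempty := by
  obtain ⟨ε, hε, hball⟩ := hy
  have hc : 0 < (S.onorm x + 1) / ε := div_pos (by linarith [S.onorm_nonneg x]) hε
  refine ⟨_, hc, ?_⟩
  rw [sub_eq_add_neg]
  refine S.smul_add_mem_of_onorm_lt hball hc ?_
  rw [onorm_neg, div_mul_cancel₀ _ hε.ne']
  exact lt_add_one _

lemma smul_sub_mem_of_M_lt {x y : X} (hy : y ∈ S.interiorC) {c : ℝ} (h : S.M x y < c) :
    c • y - x ∈ S.C := by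
  obtain ⟨b, ⟨-, hb⟩, hbc⟩ := exists_lt_of_csInf_lt (S.MSet_nonempty hy x) h
  have e : c • y - x = (c - b) • y + (b • y - x) := by module
  exact e ▸ S.add_mem (S.smul_mem (sub_pos.2 hbc).le (S.interiorC_subset hy)) hb

variable {S} {φ : X →ₗ[ℝ] ℝ}

lemma one_le_of_smul_sub_mem (hpos : S.StrictlyPos φ) {x y : X} (hx : φ x = 1) (hy : φ y = 1)
    {c : ℝ} (h : c • y - x ∈ S.C) : 1 ≤ c := by
  have hφ : φ (c • y - x) = c - 1 := by simp [hx, hy]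
  rcases eq_or_ne (c • y - x) 0 with h₀ | h₀
  · rw [h₀, map_zero] at hφ; linarith
  · linarith [hpos _ h h₀]

lemma one_lt_of_smul_sub_mem (hpos : S.StrictlyPos φ) {x y : X} (hx : φ x = 1) (hy : φ y = 1)
    (hxy : x ≠ y) {c : ℝ} (h : c • y - x ∈ S.C) : 1 < c := by
  refine (S.one_le_of_smul_sub_mem hpos hx hy h).lt_of_ne fun hc => ?_
  rw [← hc, one_smul] at h
  have := hpos _ h (sub_ne_zero.2 hxy.symm)
  simp [hx, hy] at this

lemma one_le_M (hpos : S.StrictlyPos φ) {x y : X} (hx : φ x = 1) (hy : y ∈ S.Sig φ) :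
    1 ≤ S.M x y :=
  le_csInf (S.MSet_nonempty hy.1 x) fun _ hc => S.one_le_of_smul_sub_mem hpos hx hy.2 hc.2

lemma dH_comm (x y : X) : S.dH x y = S.dH y x := by
  rw [dH, dH, mul_comm]

lemma M_le_exp_dH (hpos : S.StrictlyPos φ) {x y : X} (hx : x ∈ S.Sig φ) (hy : y ∈ S.Sig φ) :
    S.M x y ≤ Real.exp (S.dH x y) := by
  have h₁ := S.one_le_M hpos hx.2 hy
  have h₂ := S.one_le_M hpos hy.2 hx
  rw [dH, Real.exp_log (by positivity)]
  exact le_mul_of_one_le_right (by positivity) h₂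

lemma dH_le_two_mul_log (hpos : S.StrictlyPos φ) {x y : X} (hx : x ∈ S.Sig φ) (hy : y ∈ S.Sig φ)
    {a : ℝ} (h₁ : a • y - x ∈ S.C) (h₂ : a • x - y ∈ S.C) : S.dH x y ≤ 2 * Real.log a := by
  have ha : 0 < a := zero_lt_one.trans_le (S.one_le_of_smul_sub_mem hpos hx.2 hy.2 h₁)
  have hM₁ := S.one_le_M hpos hx.2 hy
  have hM₂ := S.one_le_M hpos hy.2 hx
  calc S.dH x y = Real.log (S.M x y * S.M y x) := rfl
    _ ≤ Real.log (a * a) := Real.log_le_log (by positivity)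
      (mul_le_mul (S.M_le ha h₁) (S.M_le ha h₂) (by positivity) ha.le)
    _ = 2 * Real.log a := by rw [Real.log_mul ha.ne' ha.ne']; ring

lemma smul_sub_eq_smul_lineMap (x y : X) {c : ℝ} (hc : c ≠ 1) :
    c • y - x = (c - 1) • lineMap x y (c / (c - 1)) := by
  have hc' : c - 1 ≠ 0 := sub_ne_zero.2 hc
  rw [lineMap_apply_module]
  match_scalars
  · field_simp
  · field_simp
    ring

lemma M_eq_of_lineMap_mem_Sig_iff (hpos : S.StrictlyPos φ) {x y : X} (hx : x ∈ S.Sig φ)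
    (hy : y ∈ S.Sig φ) (hxy : x ≠ y) {t : ℝ} (ht : 1 < t)
    (h : ∀ r, 1 < r → (lineMap x y r ∈ S.Sig φ ↔ r < t)) : S.M x y = t / (t - 1) := by
  have hφ : ∀ r : ℝ, φ (lineMap x y r) = 1 := fun r => by
    simp [lineMap_apply_module, hx.2, hy.2]
  -- `x` is interior, so a point of `C` at parameter `r > t` would put the point at
  -- parameter `(t + r) / 2` into `Σ_φ`
  have le_of_mem : ∀ r, 1 < r → lineMap x y r ∈ S.C → r ≤ t := by
    intro r hr hrC
    by_contra! htr
    have hl : (t + r) / (2 * r) < 1 := by rw [div_lt_one (by positivity)]; linarith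
    have hmid := S.lineMap_mem_interiorC hx.1 hrC (by positivity) hl
    rw [lineMap_lineMap_right, div_mul_eq_mul_div, mul_div_mul_right _ _ (by positivity)] at hmid
    linarith [(h _ (by linarith)).1 ⟨hmid, hφ _⟩]
  have mem_iff : ∀ c : ℝ, 1 < c → (c • y - x ∈ S.C ↔ lineMap x y (c / (c - 1)) ∈ S.C) :=
    fun c hc => by rw [smul_sub_eq_smul_lineMap x y hc.ne', S.smul_mem_iff (sub_pos.2 hc)]
  rw [M_eq_sInf]
  apply csInf_eq_of_Ioi_subset_of_subset_Ici
  · intro c (hc : t / (t - 1) < c)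
    have hc₁ : 1 < c := ((one_lt_div (sub_pos.2 ht)).2 (by linarith)).trans hc
    have hr : 1 < c / (c - 1) := (one_lt_div (sub_pos.2 hc₁)).2 (by linarith)
    refine ⟨by linarith, (mem_iff c hc₁).2 (S.interiorC_subset ?_)⟩
    exact ((h _ hr).2 ((div_sub_one_lt_iff_lt_div_sub_one hc₁ ht).2 hc)).1
  · rintro c ⟨-, hcC⟩
    have hc₁ := S.one_lt_of_smul_sub_mem hpos hx.2 hy.2 hxy hcC
    have hr : 1 < c / (c - 1) := (one_lt_div (sub_pos.2 hc₁)).2 (by linarith)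
    exact (div_sub_one_le_iff_le_div_sub_one hc₁ ht).1 (le_of_mem _ hr ((mem_iff c hc₁).1 hcC))

lemma M_eq_onorm_div (hpos : S.StrictlyPos φ) {x y x' y' : X} (hx : x ∈ S.Sig φ)
    (hy : y ∈ S.Sig φ) (hxy : x ≠ y)
    (hline : lineThrough x y ∩ S.Sig φ = openSegment ℝ x' y')
    (hxseg : x ∈ openSegment ℝ x' y) (hyseg : y ∈ openSegment ℝ y' x) :
    S.M x y = S.onorm (y' - x) / S.onorm (y' - y) := by
  obtain ⟨s, hs, rfl⟩ := exists_neg_lineMap_eq_of_mem_openSegment hxseg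
  obtain ⟨s', hs', rfl⟩ := exists_neg_lineMap_eq_of_mem_openSegment hyseg
  rw [← lineMap_apply_one_sub x y s'] at hline ⊢
  set t := 1 - s'
  have ht : 1 < t := by linarith
  have hmem := lineMap_mem_iff_of_inter_eq_openSegment hxy (by linarith) hline
  have hM := S.M_eq_of_lineMap_mem_Sig_iff hpos hx hy hxy ht fun r hr => by
    rw [hmem, Set.mem_Ioo, and_iff_right (by linarith)]
  have e₁ : lineMap x y t - x = t • (y - x) := by rw [lineMap_apply_module', add_sub_cancel_right]
  have e₂ : lineMap x y t - y = (t - 1) • (y - x) := by rw [lineMap_apply_module']; module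
  rw [hM, e₁, e₂, S.onorm_smul, S.onorm_smul, abs_of_pos (by linarith), abs_of_pos (by linarith),
    mul_div_mul_right _ _ (S.onorm_pos (sub_ne_zero.2 hxy.symm)).ne']

lemma dH_le_two_mul_log_of_onorm_sub_lt (hpos : S.StrictlyPos φ) {z w : X} (hz : z ∈ S.Sig φ)
    (hw : w ∈ S.Sig φ) {r : ℝ} (hr : 0 < r) (hball : ∀ y, S.onorm (y - z) < r → y ∈ S.C)
    {η : ℝ} (hη : 0 < η) (h : S.onorm (w - z) < η * r / (1 + η)) :
    S.dH w z ≤ 2 * Real.log (1 + η) := by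
  apply S.dH_le_two_mul_log hpos hw hz
  · have e : (1 + η) • z - w = η • z + -(w - z) := by module
    rw [e]
    refine S.smul_add_mem_of_onorm_lt hball hη ?_
    rw [onorm_neg]
    exact h.trans_le (div_le_self (by positivity) (by linarith))
  · have e : (1 + η) • w - z = η • z + (1 + η) • (w - z) := by module
    rw [e]
    refine S.smul_add_mem_of_onorm_lt hball hη ?_
    rwa [S.onorm_smul, abs_of_pos (by positivity), ← lt_div_iff₀' (by positivity)]

lemma onorm_sub_le_of_dH_lt (hpos : S.StrictlyPos φ) {z w : X} (hz : z ∈ S.Sig φ)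
    (hw : w ∈ S.Sig φ) {c : ℝ} (hc : 0 < c) (hcz : c • S.u - z ∈ S.C) {η : ℝ} (hη : 0 < η)
    (h : S.dH w z < Real.log (1 + η)) : S.onorm (w - z) ≤ η * (1 + η) * c := by
  have hexp : Real.exp (S.dH w z) < 1 + η := by
    rwa [← Real.exp_log (by positivity : 0 < 1 + η), Real.exp_lt_exp]
  have h₁ : (1 + η) • z - w ∈ S.C :=
    S.smul_sub_mem_of_M_lt hz.1 ((S.M_le_exp_dH hpos hw hz).trans_lt hexp)
  have h₂ : (1 + η) • w - z ∈ S.C :=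
    S.smul_sub_mem_of_M_lt hw.1 ((S.M_le_exp_dH hpos hz hw).trans_lt (S.dH_comm z w ▸ hexp))
  have hzC := S.interiorC_subset hz.1
  apply S.onorm_le (by positivity)
  · have e : (η * (1 + η) * c) • S.u - (w - z)
        = (η * (1 + η)) • (c • S.u - z) + ((1 + η) • z - w) + (η * η) • z := by module
    rw [e]
    exact S.add_mem (S.add_mem (S.smul_mem (by positivity) hcz) h₁)
      (S.smul_mem (by positivity) hzC)
  · have e : (η * (1 + η) * c) • S.u + (w - z)
        = (η * (1 + η)) • (c • S.u - z) + η • ((1 + η) • z - w) + ((1 + η) • w - z) := by module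
    rw [e]
    exact S.add_mem (S.add_mem (S.smul_mem (by positivity) hcz) (S.smul_mem hη.le h₁)) h₂

end OrderUnitSpace

open OrderUnitSpace

theorem hilbert_metric_eq_cross_ratio_and_topologies_coincide_general
    {X : Type*} [AddCommGroup X] [Module ℝ X] (S : OrderUnitSpace X)
    (φ : X →ₗ[ℝ] ℝ) (hpos : S.StrictlyPos φ) :
    (∀ x ∈ S.Sig φ, ∀ y ∈ S.Sig φ, x ≠ y → ∀ x' y' : X,
      lineThrough x y ∩ S.Sig φ = openSegment ℝ x' y' →
      x ∈ openSegment ℝ x' y → y ∈ openSegment ℝ y' x →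
      S.dH x y = Real.log ((S.onorm (x' - y) / S.onorm (x' - x)) *
        (S.onorm (y' - x) / S.onorm (y' - y)))) ∧
    (∀ z ∈ S.Sig φ, ∀ ε > 0, ∃ δ > 0, ∀ w ∈ S.Sig φ,
      S.onorm (w - z) < δ → S.dH w z < ε) ∧
    (∀ z ∈ S.Sig φ, ∀ ε > 0, ∃ δ > 0, ∀ w ∈ S.Sig φ,
      S.dH w z < δ → S.onorm (w - z) < ε) := by
  refine ⟨fun x hx y hy hxy x' y' hline hxseg hyseg => ?_, fun z hz ε hε => ?_,
    fun z hz ε hε => ?_⟩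
  · have hline' : lineThrough y x ∩ S.Sig φ = openSegment ℝ y' x' := by
      rw [lineThrough_comm, hline, openSegment_symm]
    rw [dH, S.M_eq_onorm_div hpos hx hy hxy hline hxseg hyseg,
      S.M_eq_onorm_div hpos hy hx hxy.symm hline' hyseg hxseg, mul_comm]
  · obtain ⟨r, hr, hball⟩ := hz.1
    refine ⟨ε / 2 * r / (1 + ε / 2), by positivity, fun w hw hwz => ?_⟩
    calc S.dH w z ≤ 2 * Real.log (1 + ε / 2) :=
          S.dH_le_two_mul_log_of_onorm_sub_lt hpos hz hw hr hball (by positivity) hwz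
      _ < 2 * (ε / 2) := by
          gcongr
          linarith [Real.log_lt_sub_one_of_pos (by positivity : 0 < 1 + ε / 2) (by linarith)]
      _ = ε := by ring
  · obtain ⟨c, hc, hcz⟩ := S.orderUnit z
    have hlim : Filter.Tendsto (fun η : ℝ => η * (1 + η) * c)
        (nhdsWithin 0 (Set.Ioi 0)) (nhds 0) :=
      ((by fun_prop : Continuous fun η : ℝ => η * (1 + η) * c).tendsto' 0 0 (by simp)).mono_left
        nhdsWithin_le_nhds
    obtain ⟨η, hηc, hη⟩ := ((hlim.eventually (gt_mem_nhds hε)).and self_mem_nhdsWithin).exists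
    exact ⟨Real.log (1 + η), Real.log_pos (by linarith), fun w hw hwz =>
      (S.onorm_sub_le_of_dH_lt hpos hz hw hc hcz hη hwz).trans_lt hηc⟩

/-- On `Σ_φ`, Birkhoff's version of Hilbert's metric
`d_H(x,y) = log (M(x/y) M(y/x))` coincides with the cross-ratio metric
`δ_H(x,y) = log [x', x, y, y']`, where `x', y'` are the endpoints of the open segment
`ℓ_{xy} ∩ Σ_φ` with `x` between `x'` and `y`, and `y` between `y'` and `x`.
Moreover, the topology induced by `d_H` on `Σ_φ` coincides with the topology induced
by the order unit norm. -/
theorem hilbert_metric_eq_cross_ratio_and_topologies_coincide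
    {X : Type*} [AddCommGroup X] [Module ℝ X] (S : OrderUnitSpace X)
    (φ : X →ₗ[ℝ] ℝ) (hstate : S.IsState φ) (hpos : S.StrictlyPos φ) :
    (∀ x ∈ S.Sig φ, ∀ y ∈ S.Sig φ, x ≠ y → ∀ x' y' : X,
      lineThrough x y ∩ S.Sig φ = openSegment ℝ x' y' →
      x ∈ openSegment ℝ x' y → y ∈ openSegment ℝ y' x →
      S.dH x y = Real.log ((S.onorm (x' - y) / S.onorm (x' - x)) *
        (S.onorm (y' - x) / S.onorm (y' - y)))) ∧
    (∀ z ∈ S.Sig φ, ∀ ε > 0, ∃ δ > 0, ∀ w ∈ S.Sig φ,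
      S.onorm (w - z) < δ → S.dH w z < ε) ∧
    (∀ z ∈ S.Sig φ, ∀ ε > 0, ∃ δ > 0, ∀ w ∈ S.Sig φ,
      S.dH w z < δ → S.onorm (w - z) < ε) :=
  hilbert_metric_eq_cross_ratio_and_topologies_coincide_general S φ hpos

end HilbertGeom
end

section
/- Let $K$ be a compact Hausdorff space, let $B$ be the unit ball of $\mathbb{R}\mathbf{1}^\perp = \{\mu \in M(K) : \mu(K) = 0\}$ with respect to the norm $\frac{1}{2}\|\cdot\|_{TV}$, and let $\mathrm{ext}(B) = \{\delta_s - \delta_t : s, t \in K,\ s \neq t\}$ be its set of extreme points. For $s \in K$, set $E_s = \{\delta_s - \delta_t : t \in K,\ t \neq s\}$. If $\emptyset \neq A \subseteq \mathrm{ext}(B)$ is such that $\frac{1}{2}\|\mu - \nu\|_{TV} = 1$ for all $\mu, \nu \in A$ with $\mu \neq \nu$, then there exists $s \in K$ such that $A \subseteq E_s$ or $A \subseteq -E_s$. -/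
/-!
Write each element of `A` as `δ_s - δ_t`. If two of them, `δ_s - δ_t` and `δ_u - δ_v`, had
`s ≠ u` and `t ≠ v`, their difference would take the value `2` on `{s, v}` and `-2` on its
complement, so its total variation would be at least `4` (this also rules out that they are
equal). Hence any two elements of `A` share their positive or their negative atom, and a family
of pairs in which any two agree in some coordinate agrees throughout in one coordinate.
-/

namespace HilbertFn

open MeasureTheory

variable (K : Type*)

/-- The total variation norm `‖μ‖_TV = |μ|(K)` of a signed measure. -/
noncomputable def tv [MeasurableSpace K] (μ : SignedMeasure K) : ℝ :=
  (μ.totalVariation Set.univ).toReal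

/-- The Dirac measure at `s`, as a signed measure. -/
noncomputable def diracSM [MeasurableSpace K] (s : K) : SignedMeasure K :=
  (Measure.dirac s).toSignedMeasure

/-- The unit ball of `ℝ𝟙^⊥ = {μ ∈ M(K) : μ(K) = 0}` with respect to the norm
`(1/2)‖·‖_TV`, inside the space `M(K)` of regular signed Borel measures. -/
def ballB [TopologicalSpace K] [MeasurableSpace K] : Set (SignedMeasure K) :=
  {μ | Measure.Regular μ.totalVariation ∧ μ Set.univ = 0 ∧ tv K μ ≤ 2}

lemma forall_fst_eq_or_forall_snd_eq {α β : Type*} {P : Set (α × β)}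
    (hP : ∀ p ∈ P, ∀ q ∈ P, p.1 = q.1 ∨ p.2 = q.2) {p₀ : α × β} (hp₀ : p₀ ∈ P) :
    (∀ p ∈ P, p.1 = p₀.1) ∨ ∀ p ∈ P, p.2 = p₀.2 := by
  by_contra! ⟨⟨q, hq, hq₁⟩, ⟨p, hp, hp₂⟩⟩
  have hq₂ : q.2 = p₀.2 := (hP q hq p₀ hp₀).resolve_left hq₁
  have hp₁ : p.1 = p₀.1 := (hP p hp p₀ hp₀).resolve_right hp₂
  rcases hP p hp q hq with h | h
  · exact hq₁ (h ▸ hp₁)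
  · exact hp₂ (h.trans hq₂)

section

variable {K} [MeasurableSpace K]

lemma abs_apply_add_abs_apply_compl_le_tv (μ : SignedMeasure K) {E : Set K}
    (hE : MeasurableSet E) : |μ E| + |μ Eᶜ| ≤ tv K μ :=
  calc |μ E| + |μ Eᶜ| ≤ μ.totalVariation.real E + μ.totalVariation.real Eᶜ :=
        add_le_add (μ.norm_le_totalVariation E) (μ.norm_le_totalVariation Eᶜ)
    _ = tv K μ := measureReal_add_measureReal_compl hE

lemma diracSM_apply (s : K) {E : Set K} (hE : MeasurableSet E) :
    diracSM K s E = E.indicator 1 s := by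
  rw [diracSM, Measure.toSignedMeasure_apply_measurable hE, Measure.real,
    Measure.dirac_apply' s hE]
  by_cases hs : s ∈ E <;> simp [hs]

lemma four_le_tv_diracSM_sub [MeasurableSingletonClass K] {s t u v : K} (hst : s ≠ t)
    (huv : u ≠ v) (hsu : s ≠ u) (htv : t ≠ v) :
    4 ≤ tv K ((diracSM K s - diracSM K t) - (diracSM K u - diracSM K v)) := by
  set μ := (diracSM K s - diracSM K t) - (diracSM K u - diracSM K v)
  set E : Set K := {s, v}
  have hE : MeasurableSet E := (Set.toFinite E).measurableSet
  have hμE : μ E = 2 := by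
    simp only [μ, sub_apply, diracSM_apply _ hE]
    norm_num [E, Set.indicator, hst.symm, htv, hsu.symm, huv]
  have hμEc : μ Eᶜ = -2 := by
    simp only [μ, sub_apply, diracSM_apply _ hE.compl]
    norm_num [E, Set.indicator, hst.symm, htv, hsu.symm, huv]
  calc (4 : ℝ) = |μ E| + |μ Eᶜ| := by rw [hμE, hμEc]; norm_num
    _ ≤ tv K μ := abs_apply_add_abs_apply_compl_le_tv μ hE

lemma eq_or_eq_of_tv_diracSM_sub_le_two [MeasurableSingletonClass K] {s t u v : K}
    (hst : s ≠ t) (huv : u ≠ v)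
    (h : tv K ((diracSM K s - diracSM K t) - (diracSM K u - diracSM K v)) ≤ 2) :
    s = u ∨ t = v := by
  by_contra! ⟨hsu, htv⟩
  linarith [four_le_tv_diracSM_sub hst huv hsu htv]

lemma tv_sub_self (μ : SignedMeasure K) : tv K (μ - μ) = 0 := by
  simp [tv, SignedMeasure.totalVariation_zero]

end

theorem equilateral_subset_of_extreme_points
    [TopologicalSpace K] [T2Space K] [MeasurableSpace K] [BorelSpace K]
    (A : Set (SignedMeasure K)) (hA : A.Nonempty)
    (hext : A ⊆ {μ : SignedMeasure K | ∃ s t : K, s ≠ t ∧ μ = diracSM K s - diracSM K t})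
    (hequi : ∀ μ ∈ A, ∀ ν ∈ A, μ ≠ ν → tv K (μ - ν) = 2) :
    ∃ s : K,
      A ⊆ {μ : SignedMeasure K | ∃ t : K, t ≠ s ∧ μ = diracSM K s - diracSM K t} ∨
      A ⊆ {μ : SignedMeasure K | ∃ t : K, t ≠ s ∧ μ = diracSM K t - diracSM K s} := by
  have htv_le : ∀ μ ∈ A, ∀ ν ∈ A, tv K (μ - ν) ≤ 2 := fun μ hμ ν hν => by
    rcases eq_or_ne μ ν with rfl | hne
    · rw [tv_sub_self]; norm_num
    · exact (hequi μ hμ ν hν hne).le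
  set P := {p : K × K | p.1 ≠ p.2 ∧ diracSM K p.1 - diracSM K p.2 ∈ A}
  have hP : ∀ p ∈ P, ∀ q ∈ P, p.1 = q.1 ∨ p.2 = q.2 := fun p hp q hq =>
    eq_or_eq_of_tv_diracSM_sub_le_two hp.1 hq.1 (htv_le _ hp.2 _ hq.2)
  obtain ⟨μ₀, hμ₀⟩ := hA
  obtain ⟨s₀, t₀, hst₀, rfl⟩ := hext hμ₀
  rcases forall_fst_eq_or_forall_snd_eq hP (p₀ := (s₀, t₀)) ⟨hst₀, hμ₀⟩ with h | h
  · refine ⟨s₀, Or.inl fun μ hμ => ?_⟩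
    obtain ⟨s, t, hst, rfl⟩ := hext hμ
    obtain rfl : s = s₀ := h (s, t) ⟨hst, hμ⟩
    exact ⟨t, hst.symm, rfl⟩
  · refine ⟨t₀, Or.inr fun μ hμ => ?_⟩
    obtain ⟨s, t, hst, rfl⟩ := hext hμ
    obtain rfl : t = t₀ := h (s, t) ⟨hst, hμ⟩
    exact ⟨s, hst, rfl⟩

end HilbertFn
end

section
/- Let $K_1, K_2$ be compact Hausdorff spaces and let $T : C(K_1)/\mathbb{R}\mathbf{1} \to C(K_2)/\mathbb{R}\mathbf{1}$ be a surjective linear isometry with respect to the variation norms. If $\theta : K_2 \to K_1$ is a bijection and $\varepsilon \in \{-1, 1\}$ are such that the adjoint $T^*$ satisfies $T^*(\delta_s - \delta_t) = \varepsilon(\delta_{\theta(s)} - \delta_{\theta(t)})$ for all distinct $s, t \in K_2$, then $\theta$ is a homeomorphism. -/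
/-!
The adjoint identity says that, up to an additive constant, `f ∘ θ` is `ε⁻¹` times a
representative of `T f̄`; hence `f ∘ θ` is continuous for every `f ∈ C(K₁)`. A compact
Hausdorff space is completely regular, so its topology is the weak topology induced by
`C(K₁)` and `θ` is continuous. A continuous bijection from a compact space onto a
Hausdorff space is a homeomorphism.
-/

namespace HilbertFn

variable (K : Type*) [TopologicalSpace K] [CompactSpace K] [T2Space K]

/-- The variation seminorm of `f ∈ C(K, ℝ)`: `sup f - inf f`. -/
noncomputable def var (f : C(K, ℝ)) : ℝ := (⨆ x, f x) - ⨅ x, f x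

/-- The subspace `ℝ𝟙` of constant functions. -/
abbrev one1 : Submodule ℝ C(K, ℝ) := Submodule.span ℝ {(1 : C(K, ℝ))}

/-- The quotient space `C(K)/ℝ𝟙`. -/
abbrev Cbar := C(K, ℝ) ⧸ one1 K

/-- The variation norm on the quotient `C(K)/ℝ𝟙`; since `var` is constant on each
equivalence class, this is the common value of `var` on the class. -/
noncomputable def varQ (x : Cbar K) : ℝ :=
  sInf (var K '' {f : C(K, ℝ) | Submodule.Quotient.mk f = x})

/-- Strictly positive continuous functions on `K`. -/
def PosC : Type _ := {f : C(K, ℝ) // ∀ x, 0 < f x}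

/-- Two strictly positive functions lie on the same ray iff they are positive scalar
multiples of each other. -/
def rayRel (f g : PosC K) : Prop := ∃ c : ℝ, 0 < c ∧ g.1 = c • f.1

/-- The projective space of rays of strictly positive continuous functions. -/
def PRay : Type _ := Quot (rayRel K)

/-- Hilbert's metric on representatives. -/
noncomputable def dHf (f g : PosC K) : ℝ :=
  Real.log ((⨆ x, f.1 x / g.1 x) * (⨆ x, g.1 x / f.1 x))

/-- Hilbert's metric on the ray space `P(C(K)₊°)`; since `dHf` is constant on rays this
is the common value on the pair of classes. -/
noncomputable def dH (F G : PRay K) : ℝ :=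
  sInf {d : ℝ | ∃ f g : PosC K,
    Quot.mk (rayRel K) f = F ∧ Quot.mk (rayRel K) g = G ∧ dHf K f g = d}

/-- The pointwise logarithm of a strictly positive continuous function. -/
noncomputable def logC (f : PosC K) : C(K, ℝ) :=
  ⟨fun x => Real.log (f.1 x), (map_continuous f.1).log fun x => (f.2 x).ne'⟩

end HilbertFn

section

variable {X Y : Type*} [TopologicalSpace X] [TopologicalSpace Y]

theorem continuous_of_sub_eq_mul_sub {g h : X → ℝ} (hg : Continuous g) {ε : ℝ} (hε : ε ≠ 0)
    (hgh : ∀ s t, g s - g t = ε * (h s - h t)) : Continuous h := by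
  refine continuous_iff_continuousAt.2 fun x => ?_
  have hx : h = fun s => ε⁻¹ * (g s - g x) + h x := by
    funext s
    rw [hgh s x]
    field_simp
    ring
  rw [hx]
  fun_prop

theorem continuous_of_forall_continuous_comp [CompletelyRegularSpace Y] {θ : X → Y}
    (h : ∀ f : C(Y, ℝ), Continuous (f ∘ θ)) : Continuous θ := by
  refine continuous_def.2 fun U hU => isOpen_iff_forall_mem_open.2 fun x hx => ?_
  obtain ⟨f, hf, hfx, hfU⟩ := CompletelyRegularSpace.completely_regular_isOpen _ U hU hx
  let F : C(Y, ℝ) := ⟨fun y => f y, continuous_subtype_val.comp hf⟩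
  refine ⟨F ∘ θ ⁻¹' Set.Iio 1, fun s hs => ?_, (h F).isOpen_preimage _ isOpen_Iio, ?_⟩
  · by_contra hsU
    have hFs : F (θ s) = 1 := congrArg Subtype.val (hfU hsU)
    simp [hFs] at hs
  · simp [F, hfx]

end

namespace HilbertFn

theorem bijection_from_adjoint_is_homeomorphism_general
    {K₁ : Type*} [TopologicalSpace K₁] [CompactSpace K₁] [T2Space K₁]
    {K₂ : Type*} [TopologicalSpace K₂] [CompactSpace K₂]
    (T : Cbar K₁ →ₗ[ℝ] Cbar K₂)
    (θ : K₂ → K₁) (hbij : Function.Bijective θ)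
    (ε : ℝ) (hε : ε = 1 ∨ ε = -1)
    (hadj : ∀ f : C(K₁, ℝ), ∀ g : C(K₂, ℝ),
      Submodule.Quotient.mk g = T (Submodule.Quotient.mk f) →
      ∀ s t : K₂, g s - g t = ε * (f (θ s) - f (θ t))) :
    IsHomeomorph θ := by
  have hε0 : ε ≠ 0 := by rcases hε with rfl | rfl <;> norm_num
  have hcomp : ∀ f : C(K₁, ℝ), Continuous (f ∘ θ) := fun f => by
    obtain ⟨g, hg⟩ := Submodule.Quotient.mk_surjective _ (T (Submodule.Quotient.mk f))
    exact continuous_of_sub_eq_mul_sub g.continuous hε0 (hadj f g hg)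
  exact isHomeomorph_iff_continuous_bijective.2 ⟨continuous_of_forall_continuous_comp hcomp, hbij⟩

/-- Let `T : C(K₁)/ℝ𝟙 → C(K₂)/ℝ𝟙` be a surjective linear isometry
for the variation norms. If `θ : K₂ → K₁` is a bijection and `ε ∈ {-1, 1}` are such
that the adjoint satisfies `T*(δ_s - δ_t) = ε (δ_{θ s} - δ_{θ t})` for all `s, t ∈ K₂`
(equivalently, every representative `g` of `T f̄` satisfies
`g s - g t = ε (f (θ s) - f (θ t))`), then `θ` is a homeomorphism. -/
theorem bijection_from_adjoint_is_homeomorphism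
    {K₁ : Type*} [TopologicalSpace K₁] [CompactSpace K₁] [T2Space K₁]
    {K₂ : Type*} [TopologicalSpace K₂] [CompactSpace K₂] [T2Space K₂]
    (T : Cbar K₁ →ₗ[ℝ] Cbar K₂) (hsurj : Function.Surjective T)
    (hiso : ∀ x : Cbar K₁, varQ K₂ (T x) = varQ K₁ x)
    (θ : K₂ → K₁) (hbij : Function.Bijective θ)
    (ε : ℝ) (hε : ε = 1 ∨ ε = -1)
    (hadj : ∀ f : C(K₁, ℝ), ∀ g : C(K₂, ℝ),
      Submodule.Quotient.mk g = T (Submodule.Quotient.mk f) →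
      ∀ s t : K₂, g s - g t = ε * (f (θ s) - f (θ t))) :
    IsHomeomorph θ :=
  bijection_from_adjoint_is_homeomorphism_general T θ hbij ε hε hadj

end HilbertFn
end
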